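/- Let U be a viscous shock profile and assume the Lax condition f′(0) < s < f′(u₋). Set λ₋ := u₋^{1−m}·(f′(u₋) − s) > 0. Then: (a) there exist constants 0 < c₁ ≤ c₂ and Z > 0 such that c₁·z^{−1/(1−m)} ≤ U(z) ≤ c₂·z^{−1/(1−m)} for all z ≥ Z; (b) there exist constants 0 < c₃ ≤ c₄ and Z′ > 0 such that c₃·e^{−λ₋·|z|} ≤ u₋ − U(z) ≤ c₄·e^{−λ₋·|z|} for all z ≤ −Z′. -/

import Mathlib

open MeasureTheory Real Filter Topology Set

noncomputable section

private lemma monoOn_of_deriv_nonneg' {g : ℝ → ℝ} {S : Set ℝ} (hS : Convex ℝ S)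
    (hd : Differentiable ℝ g) (h : ∀ z ∈ S, 0 ≤ deriv g z) : MonotoneOn g S :=
  monotoneOn_of_deriv_nonneg hS hd.continuous.continuousOn
    (hd.differentiableOn.mono interior_subset)
    (fun z hz => h z (interior_subset hz))


/-- `n`-th partial derivative in the first (space) variable. -/
def dxn (n : ℕ) (φ : ℝ → ℝ → ℝ) (x t : ℝ) : ℝ := iteratedDeriv n (fun y => φ y t) x

/-- partial derivative in the second (time) variable. -/
def dt1 (φ : ℝ → ℝ → ℝ) (x t : ℝ) : ℝ := deriv (fun τ => φ x τ) t

/-- Japanese bracket `⟨y⟩ = √(1+y²)`. -/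
def jb (y : ℝ) : ℝ := Real.sqrt (1 + y ^ 2)

/-- One-sided Japanese bracket `⟨y⟩₊`. -/
def jbp (y : ℝ) : ℝ := if 0 ≤ y then Real.sqrt (1 + y ^ 2) else 1

/-- A viscous shock profile for `u_t + f(u)_x = (u^{m-1} u_x)_x` with speed `s`. -/
def IsShockProfile (m um s : ℝ) (f U : ℝ → ℝ) : Prop :=
  ContDiff ℝ (⊤ : ℕ∞) U ∧ (∀ z, 0 < U z ∧ U z < um) ∧
  (∀ z, deriv U z = U z ^ (1 - m) * (f (U z) - s * U z)) ∧
  Tendsto U atBot (nhds um) ∧ Tendsto U atTop (nhds 0)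

set_option maxHeartbeats 2000000 in
/-- Decay rates of the viscous shock profile: algebraic decay `z^{-1/(1-m)}` at `+∞`
and exponential rate `λ₋ = u₋^{1-m}(f′(u₋) − s)` at `−∞`, under the Lax condition. -/
theorem shock_profile_decay_rates
    (m um s : ℝ) (f U : ℝ → ℝ)
    (hm1 : 0 < m) (hm2 : m < 1)
    (hf : ContDiff ℝ (⊤ : ℕ∞) f) (hconv : ConvexOn ℝ Set.univ f) (hf0 : f 0 = 0)
    (hum : 0 < um) (hRH : s = f um / um)
    (hlax1 : deriv f 0 < s) (hlax2 : s < deriv f um)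
    (hU : IsShockProfile m um s f U) :
    0 < um ^ (1 - m) * (deriv f um - s) ∧
    (∃ c₁ c₂ Z : ℝ, 0 < c₁ ∧ c₁ ≤ c₂ ∧ 0 < Z ∧ ∀ z, Z ≤ z →
      c₁ * z ^ (-(1 / (1 - m))) ≤ U z ∧ U z ≤ c₂ * z ^ (-(1 / (1 - m)))) ∧
    (∃ c₃ c₄ Z' : ℝ, 0 < c₃ ∧ c₃ ≤ c₄ ∧ 0 < Z' ∧ ∀ z, z ≤ -Z' →
      c₃ * Real.exp (-(um ^ (1 - m) * (deriv f um - s)) * |z|) ≤ um - U z ∧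
      um - U z ≤ c₄ * Real.exp (-(um ^ (1 - m) * (deriv f um - s)) * |z|)) := by
  obtain ⟨hUs, hUrange, hode, hUbot, hUtop⟩ := hU
  refine ⟨mul_pos (Real.rpow_pos_of_pos hum _) (sub_pos.mpr hlax2), ?_, ?_⟩
  · -- part (a): algebraic decay at +∞
    have hUd : Differentiable ℝ U := hUs.differentiable (by simp)
    have hfd : Differentiable ℝ f := hf.differentiable (by simp)
    have hUpos : ∀ z, 0 < U z := fun z => (hUrange z).1
    have hm1m : (0:ℝ) < 1 - m := by linarith
    set α := s - deriv f 0 with hα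
    have hαpos : 0 < α := sub_pos.mpr hlax1
    -- flux bound near zero
    have hflux : ∃ δ > 0, ∀ u : ℝ, 0 < u → u ≤ δ →
        α/2 * u ≤ s*u - f u ∧ s*u - f u ≤ 2*α*u := by
      have hs : Tendsto (fun u => f u / u) (𝓝[≠] (0:ℝ)) (𝓝 (deriv f 0)) := by
        have h := hasDerivAt_iff_tendsto_slope.mp (hfd 0).hasDerivAt
        refine h.congr (fun u => ?_)
        simp [slope_def_field, hf0]
      have hev : ∀ᶠ u in 𝓝[≠] (0:ℝ), dist (f u / u) (deriv f 0) < α/2 :=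
        Metric.tendsto_nhds.mp hs (α/2) (half_pos hαpos)
      rw [Filter.Eventually, Metric.mem_nhdsWithin_iff] at hev
      obtain ⟨ε, hε, hball⟩ := hev
      refine ⟨ε/2, half_pos hε, fun u hu hu2 => ?_⟩
      have hmem : u ∈ Metric.ball (0:ℝ) ε := by
        simp only [Metric.mem_ball, Real.dist_eq, sub_zero, abs_of_pos hu]
        linarith
      have hd2 : dist (f u / u) (deriv f 0) < α/2 := hball ⟨hmem, ne_of_gt hu⟩
      rw [Real.dist_eq, abs_lt] at hd2
      have h1 : α/2 ≤ s - f u / u := by rw [hα] at *; linarith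
      have h2 : s - f u / u ≤ 2*α := by rw [hα] at *; linarith
      have e1 : (s - f u / u) * u = s * u - f u := by field_simp
      constructor
      · calc α/2 * u ≤ (s - f u / u) * u := mul_le_mul_of_nonneg_right h1 hu.le
          _ = s*u - f u := e1
      · calc s*u - f u = (s - f u / u) * u := e1.symm
          _ ≤ 2*α*u := mul_le_mul_of_nonneg_right h2 hu.le
    obtain ⟨δ, hδ, hfb⟩ := hflux
    -- eventually U z ≤ δ
    have hevU : ∀ᶠ z in atTop, U z ∈ Iio δ := hUtop.eventually_mem (Iio_mem_nhds hδ)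
    obtain ⟨Z₀, hZ₀⟩ := eventually_atTop.mp hevU
    set Z := max Z₀ 1 with hZ
    have hZ1 : (1:ℝ) ≤ Z := le_max_right _ _
    have hZpos : (0:ℝ) < Z := lt_of_lt_of_le one_pos hZ1
    have hUδ : ∀ z, Z ≤ z → U z ≤ δ := fun z hz =>
      le_of_lt (hZ₀ z (le_trans (le_max_left _ _) hz))
    -- W = U^(m-1)
    set W : ℝ → ℝ := fun z => U z ^ (m - 1 : ℝ) with hWdef
    have hWd : ∀ z, HasDerivAt W (deriv U z * (m-1) * U z ^ (m-1-1 : ℝ)) z := fun z =>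
      (hUd z).hasDerivAt.rpow_const (Or.inl (ne_of_gt (hUpos z)))
    have hWdiff : Differentiable ℝ W := fun z => (hWd z).differentiableAt
    have hWderiv : ∀ z, deriv W z = (1 - m) * ((s * U z - f (U z)) / U z) := by
      intro z
      rw [(hWd z).deriv, hode z]
      have h1 : U z ^ (1 - m : ℝ) * U z ^ (m - 1 - 1 : ℝ) = (U z)⁻¹ := by
        rw [← Real.rpow_add (hUpos z)]
        have : (1 - m) + (m - 1 - 1) = (-1 : ℝ) := by ring
        rw [this, Real.rpow_neg_one]
      calc U z ^ (1-m:ℝ) * (f (U z) - s * U z) * (m-1) * U z ^ (m-1-1:ℝ)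
          = (U z ^ (1-m:ℝ) * U z ^ (m-1-1:ℝ)) * ((f (U z) - s * U z) * (m-1)) := by ring
        _ = (U z)⁻¹ * ((f (U z) - s * U z) * (m-1)) := by rw [h1]
        _ = (1 - m) * ((s * U z - f (U z)) / U z) := by
            field_simp
            ring
    set A := (1-m)*(α/2) with hA
    set B := (1-m)*(2*α) with hB
    have hApos : 0 < A := by positivity
    have hBpos : 0 < B := by positivity
    have hAB : A ≤ B := by nlinarith
    have hWlb : ∀ z, Z ≤ z → A ≤ deriv W z := by
      intro z hz
      rw [hWderiv z]
      have hb := (hfb (U z) (hUpos z) (hUδ z hz)).1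
      have : α/2 ≤ (s * U z - f (U z)) / U z := (le_div_iff₀ (hUpos z)).mpr hb
      rw [hA]
      exact mul_le_mul_of_nonneg_left this (le_of_lt hm1m)
    have hWub : ∀ z, Z ≤ z → deriv W z ≤ B := by
      intro z hz
      rw [hWderiv z]
      have hb := (hfb (U z) (hUpos z) (hUδ z hz)).2
      have : (s * U z - f (U z)) / U z ≤ 2*α := (div_le_iff₀ (hUpos z)).mpr hb
      rw [hB]
      exact mul_le_mul_of_nonneg_left this (le_of_lt hm1m)
    -- linear bounds on W
    have hlow : ∀ z, Z ≤ z → W Z + A * (z - Z) ≤ W z := by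
      intro z hz
      have hg : ∀ x : ℝ, HasDerivAt (fun z => W z - A * z) (deriv W x - A) x := by
        intro x
        have h1 : HasDerivAt (fun z : ℝ => A * z) A x := by
          simpa using (hasDerivAt_id x).const_mul A
        exact ((hWdiff x).hasDerivAt).sub h1
      have hmono : MonotoneOn (fun z => W z - A * z) (Ici Z) := by
        apply monoOn_of_deriv_nonneg' (convex_Ici Z) (fun x => (hg x).differentiableAt)
        intro x hx
        rw [(hg x).deriv]
        linarith [hWlb x hx]
      have := hmono (self_mem_Ici) (mem_Ici.mpr hz) hz
      simp only at this
      linarith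
    have hup : ∀ z, Z ≤ z → W z ≤ W Z + B * (z - Z) := by
      intro z hz
      have hg : ∀ x : ℝ, HasDerivAt (fun z => B * z - W z) (B - deriv W x) x := by
        intro x
        have h1 : HasDerivAt (fun z : ℝ => B * z) B x := by
          simpa using (hasDerivAt_id x).const_mul B
        exact h1.sub ((hWdiff x).hasDerivAt)
      have hmono : MonotoneOn (fun z => B * z - W z) (Ici Z) := by
        apply monoOn_of_deriv_nonneg' (convex_Ici Z) (fun x => (hg x).differentiableAt)
        intro x hx
        rw [(hg x).deriv]
        linarith [hWub x hx]
      have := hmono (self_mem_Ici) (mem_Ici.mpr hz) hz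
      simp only at this
      linarith
    set A' := A/2 with hA'
    set B' := W Z + B with hB'
    have hWZpos : 0 < W Z := Real.rpow_pos_of_pos (hUpos Z) _
    have hA'pos : 0 < A' := half_pos hApos
    have hB'pos : 0 < B' := by positivity
    have hA'B' : A' ≤ B' := by
      rw [hA', hB']; linarith
    set Z₁ := 2*Z with hZ₁
    have hZ₁pos : 0 < Z₁ := by positivity
    have hWbounds : ∀ z, Z₁ ≤ z → A' * z ≤ W z ∧ W z ≤ B' * z := by
      intro z hz
      have hzZ : Z ≤ z := by rw [hZ₁] at hz; linarith
      have hz1 : (1:ℝ) ≤ z := le_trans hZ1 hzZ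
      constructor
      · have := hlow z hzZ
        have h2 : A * (z - Z) ≥ A' * z := by
          rw [hA']
          have : z - Z ≥ z/2 := by rw [hZ₁] at hz; linarith
          nlinarith
        linarith
      · have := hup z hzZ
        have h2 : W Z + B * (z - Z) ≤ B' * z := by
          rw [hB']
          nlinarith
        linarith
    -- convert to bounds on U
    set p := -(1 / (1 - m)) with hp
    have hpneg : p ≤ 0 := by
      rw [hp]
      simp only [neg_nonpos]
      positivity
    have hrecover : ∀ z, W z ^ p = U z := by
      intro z
      show (U z ^ (m - 1 : ℝ)) ^ p = U z
      rw [← Real.rpow_mul (hUpos z).le]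
      have hmp : (m - 1) * p = 1 := by
        rw [hp]
        field_simp
        ring
      rw [hmp, Real.rpow_one]
    refine ⟨B' ^ p, A' ^ p, Z₁, Real.rpow_pos_of_pos hB'pos p,
      Real.rpow_le_rpow_of_nonpos hA'pos hA'B' hpneg, hZ₁pos, fun z hz => ?_⟩
    have hzpos : 0 < z := lt_of_lt_of_le hZ₁pos hz
    obtain ⟨hlb, hub⟩ := hWbounds z hz
    have hWzpos : 0 < W z := Real.rpow_pos_of_pos (hUpos z) _
    constructor
    · calc B' ^ p * z ^ p = (B' * z) ^ p := (Real.mul_rpow hB'pos.le hzpos.le).symm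
        _ ≤ W z ^ p := Real.rpow_le_rpow_of_nonpos hWzpos hub hpneg
        _ = U z := hrecover z
    · calc U z = W z ^ p := (hrecover z).symm
        _ ≤ (A' * z) ^ p := Real.rpow_le_rpow_of_nonpos (by positivity) hlb hpneg
        _ = A' ^ p * z ^ p := Real.mul_rpow hA'pos.le hzpos.le
  · -- part (b): exponential decay at -∞
    set lam := um ^ (1 - m) * (deriv f um - s) with hlam
    have hUd : Differentiable ℝ U := hUs.differentiable (by simp)
    have hfd : Differentiable ℝ f := hf.differentiable (by simp)
    have hf's : ContDiff ℝ (⊤ : ℕ∞) (deriv f) := by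
      have := contDiff_infty_iff_deriv.mp (by exact_mod_cast hf)
      exact_mod_cast this.2
    have hf'd : Differentiable ℝ (deriv f) := hf's.differentiable (by simp)
    have hf''c : Continuous (deriv (deriv f)) := by
      have := contDiff_infty_iff_deriv.mp (by exact_mod_cast hf's)
      exact_mod_cast this.2.continuous
    have hUpos : ∀ z, 0 < U z := fun z => (hUrange z).1
    have hUlt : ∀ z, U z < um := fun z => (hUrange z).2
    have hm1m : (0:ℝ) < 1 - m := by linarith
    have hlampos : 0 < lam := by
      rw [hlam]
      exact mul_pos (Real.rpow_pos_of_pos hum _) (sub_pos.mpr hlax2)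
    have hfum : f um = s * um := by rw [hRH]; field_simp
    -- the function F and its derivatives
    set F : ℝ → ℝ := fun u => u ^ (1-m:ℝ) * (s*u - f u) - lam * (um - u) with hFdef
    set F' : ℝ → ℝ := fun u =>
      ((1-m) * u ^ (1-m-1:ℝ) * (s*u - f u) + u ^ (1-m:ℝ) * (s - deriv f u)) + lam with hF'def
    set F'' : ℝ → ℝ := fun u =>
      (((1-m-1) * u ^ (1-m-1-1:ℝ) * (1-m)) * (s*u - f u) + ((1-m) * u ^ (1-m-1:ℝ)) * (s - deriv f u))
      + ((1-m) * u ^ (1-m-1:ℝ) * (s - deriv f u) + u ^ (1-m:ℝ) * (-(deriv (deriv f) u))) with hF''def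
    have hsf : ∀ u : ℝ, HasDerivAt (fun u => s*u - f u) (s - deriv f u) u := by
      intro u
      exact (((hasDerivAt_id u).const_mul s).sub (hfd u).hasDerivAt).congr_deriv (by ring)
    have hF : ∀ u : ℝ, 0 < u → HasDerivAt F (F' u) u := by
      intro u hu
      have h1 : HasDerivAt (fun u : ℝ => u ^ (1-m:ℝ)) ((1-m) * u ^ (1-m-1:ℝ)) u := by
        simpa using Real.hasDerivAt_rpow_const (p := 1-m) (Or.inl hu.ne')
      have h3 := h1.mul (hsf u)
      have h4 : HasDerivAt (fun u : ℝ => lam * (um - u)) (-lam) u := by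
        simpa using ((hasDerivAt_const u um).sub (hasDerivAt_id u)).const_mul lam
      have := h3.sub h4
      exact this.congr_deriv (by simp only [hF'def]; ring)
    have hF' : ∀ u : ℝ, 0 < u → HasDerivAt F' (F'' u) u := by
      intro u hu
      have h1 : HasDerivAt (fun u : ℝ => u ^ (1-m:ℝ)) ((1-m) * u ^ (1-m-1:ℝ)) u := by
        simpa using Real.hasDerivAt_rpow_const (p := 1-m) (Or.inl hu.ne')
      have h1' : HasDerivAt (fun u : ℝ => (1-m) * u ^ (1-m-1:ℝ))
          ((1-m-1) * u ^ (1-m-1-1:ℝ) * (1-m)) u := by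
        have := (Real.hasDerivAt_rpow_const (p := 1-m-1) (x := u) (Or.inl hu.ne')).const_mul (1-m)
        exact this.congr_deriv (by ring)
      have h5 : HasDerivAt (fun u : ℝ => s - deriv f u) (-(deriv (deriv f) u)) u := by
        exact ((hasDerivAt_const u s).sub (hf'd u).hasDerivAt).congr_deriv (by ring)
      have hA := h1'.mul (hsf u)
      have hB := h1.mul h5
      have := (hA.add hB).add_const lam
      exact this
    -- values at um
    have hFum : F um = 0 := by
      rw [hFdef]
      simp [hfum]
    have hF'um : F' um = 0 := by
      rw [hF'def]
      simp only [hfum]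
      have h1 : s * um - s * um = 0 := by ring
      rw [hlam]
      ring_nf
    -- bound |F''| on S
    set S := Icc (um/2) um with hSdef
    have hSpos : ∀ x ∈ S, 0 < x := fun x hx => lt_of_lt_of_le (half_pos hum) hx.1
    have hF''cont : ContinuousOn F'' S := by
      have hrp : ∀ (q : ℝ), ContinuousOn (fun u : ℝ => u ^ q) S := fun q x hx =>
        (Real.continuousAt_rpow_const x q (Or.inl (ne_of_gt (hSpos x hx)))).continuousWithinAt
      rw [hF''def]
      have hc1 : ContinuousOn (fun u : ℝ => s * u - f u) S :=
        ((continuous_const.mul continuous_id).sub hfd.continuous).continuousOn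
      have hc2 : ContinuousOn (fun u : ℝ => s - deriv f u) S :=
        (continuous_const.sub hf'd.continuous).continuousOn
      exact (((continuousOn_const.mul (hrp _)).mul continuousOn_const).mul hc1 |>.add
        ((continuousOn_const.mul (hrp _)).mul hc2)).add
        (((continuousOn_const.mul (hrp _)).mul hc2).add ((hrp _).mul hf''c.neg.continuousOn))
    obtain ⟨M₀, hM₀⟩ := (isCompact_Icc).exists_bound_of_continuousOn hF''cont
    set M₂ := max M₀ 1 with hM₂def
    have hM₂pos : (0:ℝ) < M₂ := lt_of_lt_of_le one_pos (le_max_right _ _)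
    have hM₂ : ∀ x ∈ S, |F'' x| ≤ M₂ := fun x hx =>
      le_trans (hM₀ x hx) (le_max_left _ _)
    -- MVT 1 : |F' t| ≤ M₂ (um - t) on S
    have hF'b : ∀ t ∈ S, |F' t| ≤ M₂ * (um - t) := by
      intro t ht
      have h := norm_image_sub_le_of_norm_deriv_le_segment'
        (f := F') (f' := F'') (a := t) (b := um) (C := M₂)
        (fun x hx => (hF' x (lt_of_lt_of_le (half_pos hum) (le_trans ht.1 hx.1))).hasDerivWithinAt)
        (fun x hx => hM₂ x ⟨le_trans ht.1 hx.1, hx.2.le⟩)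
        um (right_mem_Icc.mpr ht.2)
      rw [hF'um] at h
      simpa [abs_sub_comm] using h
    -- MVT 2 : |F u| ≤ M₂ (um - u)^2 on S
    have hFb : ∀ u ∈ S, |F u| ≤ M₂ * (um - u) ^ 2 := by
      intro u hu
      have h := norm_image_sub_le_of_norm_deriv_le_segment'
        (f := F) (f' := F') (a := u) (b := um) (C := M₂ * (um - u))
        (fun x hx => (hF x (lt_of_lt_of_le (half_pos hum) (le_trans hu.1 hx.1))).hasDerivWithinAt)
        (fun x hx => by
          have h1 := hF'b x ⟨le_trans hu.1 hx.1, hx.2.le⟩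
          have h2 : um - x ≤ um - u := by linarith [hx.1]
          calc ‖F' x‖ ≤ M₂ * (um - x) := h1
            _ ≤ M₂ * (um - u) := mul_le_mul_of_nonneg_left h2 hM₂pos.le)
        um (right_mem_Icc.mpr hu.2)
      rw [hFum] at h
      have : (um - u) ^ 2 = (um - u) * (um - u) := sq (um - u) ▸ by ring
      rw [this]
      calc |F u| = ‖(0:ℝ) - F u‖ := by simp [abs_sub_comm]
        _ ≤ M₂ * (um - u) * (um - um + (um - u)) := by simpa using h
        _ = M₂ * ((um - u) * (um - u)) := by ring
    -- choose region
    set δ := min (um/2) (lam/(2*M₂)) with hδdef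
    have hδpos : 0 < δ := lt_min (half_pos hum) (by positivity)
    have hev : ∀ᶠ z in atBot, U z ∈ Ioi (um - δ) :=
      hUbot.eventually_mem (Ioi_mem_nhds (by linarith))
    obtain ⟨z₁, hz₁⟩ := eventually_atBot.mp hev
    set z₀ := min z₁ (-1) with hz₀def
    have hz₀neg : z₀ ≤ -1 := min_le_right _ _
    have hreg : ∀ z, z ≤ z₀ → um - δ < U z := fun z hz =>
      hz₁ z (le_trans hz (min_le_left _ _))
    set V : ℝ → ℝ := fun z => um - U z with hVdef
    have hVpos : ∀ z, 0 < V z := fun z => sub_pos.mpr (hUlt z)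
    have hVd : ∀ z, HasDerivAt V (F (U z) + lam * V z) z := by
      intro z
      have h0 : HasDerivAt V (0 - deriv U z) z :=
        (hasDerivAt_const z um).sub (hUd z).hasDerivAt
      convert h0 using 1
      rw [hode z, hFdef, hVdef]
      ring
    have hVdiff : Differentiable ℝ V := fun z => (hVd z).differentiableAt
    have hUz_mem : ∀ z, z ≤ z₀ → U z ∈ S := by
      intro z hz
      refine ⟨?_, (hUlt z).le⟩
      have h1 := hreg z hz
      have h2 : δ ≤ um/2 := min_le_left _ _
      linarith
    have hVδ : ∀ z, z ≤ z₀ → V z ≤ δ := by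
      intro z hz
      have := hreg z hz
      rw [hVdef]; simp only; linarith
    have hFUb : ∀ z, z ≤ z₀ → |F (U z)| ≤ M₂ * (V z)^2 := by
      intro z hz
      have := hFb (U z) (hUz_mem z hz)
      simpa [hVdef] using this
    have hderivV : ∀ z, deriv V z = F (U z) + lam * V z := fun z => (hVd z).deriv
    set a := lam/2 with hadef
    have hapos : 0 < a := half_pos hlampos
    have hcrude : ∀ z, z ≤ z₀ → a * V z ≤ deriv V z := by
      intro z hz
      rw [hderivV z]
      have h1 := (abs_le.mp (hFUb z hz)).1
      have h2 : M₂ * (V z)^2 ≤ (lam/2) * V z := by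
        have hδ2 : M₂ * δ ≤ lam/2 := by
          have hle : δ ≤ lam/(2*M₂) := min_le_right _ _
          calc M₂ * δ ≤ M₂ * (lam/(2*M₂)) := mul_le_mul_of_nonneg_left hle hM₂pos.le
            _ = lam/2 := by field_simp
        have h3 := hVδ z hz
        calc M₂ * (V z)^2 = (M₂ * V z) * V z := by ring
          _ ≤ (lam/2) * V z := mul_le_mul_of_nonneg_right
              (le_trans (mul_le_mul_of_nonneg_left h3 hM₂pos.le) hδ2) (hVpos z).le
      rw [hadef]
      clear_value F M₂ V
      linarith
    -- crude upper bound V z ≤ C exp(a z)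
    have hexp : ∀ x : ℝ, HasDerivAt (fun z : ℝ => Real.exp (-(a*z))) (Real.exp (-(a*x)) * (-a)) x := by
      intro x
      have h : HasDerivAt (fun z : ℝ => -(a*z)) (-a) x := by
        exact ((hasDerivAt_id x).const_mul a).neg.congr_deriv (by ring)
      exact h.exp
    have hh : ∀ x : ℝ, HasDerivAt (fun z => V z * Real.exp (-(a*z)))
        ((deriv V x - a * V x) * Real.exp (-(a*x))) x := by
      intro x
      have h := ((hVdiff x).hasDerivAt.mul (hexp x))
      exact h.congr_deriv (by ring)
    have hmono1 : MonotoneOn (fun z => V z * Real.exp (-(a*z))) (Iic z₀) := by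
      apply monoOn_of_deriv_nonneg' (convex_Iic z₀) (fun x => (hh x).differentiableAt)
      intro x hx
      rw [(hh x).deriv]
      exact mul_nonneg (by linarith [hcrude x hx]) (Real.exp_pos _).le
    set C := V z₀ * Real.exp (-(a*z₀)) with hCdef
    have hCpos : 0 < C := mul_pos (hVpos z₀) (Real.exp_pos _)
    have hVub : ∀ z, z ≤ z₀ → V z ≤ C * Real.exp (a*z) := by
      intro z hz
      have h := hmono1 (mem_Iic.mpr hz) (mem_Iic.mpr le_rfl) hz
      have h2 : V z * Real.exp (-(a*z)) * Real.exp (a*z) ≤ C * Real.exp (a*z) :=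
        mul_le_mul_of_nonneg_right h (Real.exp_pos (a*z)).le
      have he : V z * Real.exp (-(a*z)) * Real.exp (a*z) = V z := by
        rw [mul_assoc, ← Real.exp_add, neg_add_cancel, Real.exp_zero, mul_one]
      rw [he] at h2
      exact h2
    -- the function w = log V - lam z
    set w : ℝ → ℝ := fun z => Real.log (V z) - lam * z with hwdef
    have hwd : ∀ x, HasDerivAt w (deriv V x / V x - lam) x := by
      intro x
      have h1 : HasDerivAt (fun z => Real.log (V z)) (deriv V x / V x) x :=
        ((hVdiff x).hasDerivAt).log (hVpos x).ne'
      have h2 : HasDerivAt (fun z : ℝ => lam * z) lam x := by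
        simpa using (hasDerivAt_id x).const_mul lam
      exact h1.sub h2
    have hwd' : ∀ x, HasDerivAt w (deriv w x) x := fun x => ((hwd x).differentiableAt).hasDerivAt
    have hwb : ∀ z, z ≤ z₀ → |deriv w z| ≤ M₂ * C * Real.exp (a*z) := by
      intro z hz
      rw [(hwd z).deriv, hderivV z]
      have heq : (F (U z) + lam * V z) / V z - lam = F (U z) / V z := by
        rw [eq_div_iff (hVpos z).ne', sub_mul, div_mul_cancel₀ _ (hVpos z).ne']
        ring
      rw [heq, abs_div, abs_of_pos (hVpos z), div_le_iff₀ (hVpos z)]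
      calc |F (U z)| ≤ M₂ * (V z)^2 := hFUb z hz
        _ = M₂ * V z * V z := by ring
        _ ≤ M₂ * (C * Real.exp (a*z)) * V z :=
            mul_le_mul_of_nonneg_right (mul_le_mul_of_nonneg_left (hVub z hz) hM₂pos.le)
              (hVpos z).le
        _ = M₂ * C * Real.exp (a*z) * V z := by ring
    set E := M₂ * C / a with hEdef
    have hEpos : 0 < E := by positivity
    have hexp2 : ∀ x : ℝ, HasDerivAt (fun z : ℝ => E * Real.exp (a*z)) (M₂ * C * Real.exp (a*x)) x := by
      intro x
      have h : HasDerivAt (fun z : ℝ => a*z) a x := by simpa using (hasDerivAt_id x).const_mul a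
      have h2 := (h.exp.const_mul E)
      exact h2.congr_deriv (by rw [hEdef]; field_simp <;> ring)
    have hwup : ∀ z, z ≤ z₀ → w z ≤ w z₀ + E * Real.exp (a*z₀) := by
      intro z hz
      have hg : ∀ x, HasDerivAt (fun z => w z + E * Real.exp (a*z))
          (deriv w x + M₂ * C * Real.exp (a*x)) x := fun x => (hwd' x).add (hexp2 x)
      have hmono : MonotoneOn (fun z => w z + E * Real.exp (a*z)) (Iic z₀) := by
        apply monoOn_of_deriv_nonneg' (convex_Iic z₀) (fun x => (hg x).differentiableAt)
        intro x hx
        rw [(hg x).deriv]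
        linarith [(abs_le.mp (hwb x hx)).1]
      have h : w z + E * Real.exp (a*z) ≤ w z₀ + E * Real.exp (a*z₀) :=
        hmono (mem_Iic.mpr hz) (mem_Iic.mpr le_rfl) hz
      have hpos : (0:ℝ) ≤ E * Real.exp (a*z) := by positivity
      clear_value V w E a z₀ C M₂ F
      linarith
    have hwlow : ∀ z, z ≤ z₀ → w z₀ - E * Real.exp (a*z₀) ≤ w z := by
      intro z hz
      have hg : ∀ x, HasDerivAt (fun z => E * Real.exp (a*z) - w z)
          (M₂ * C * Real.exp (a*x) - deriv w x) x := fun x => (hexp2 x).sub (hwd' x)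
      have hmono : MonotoneOn (fun z => E * Real.exp (a*z) - w z) (Iic z₀) := by
        apply monoOn_of_deriv_nonneg' (convex_Iic z₀) (fun x => (hg x).differentiableAt)
        intro x hx
        rw [(hg x).deriv]
        linarith [(abs_le.mp (hwb x hx)).2]
      have h : E * Real.exp (a*z) - w z ≤ E * Real.exp (a*z₀) - w z₀ :=
        hmono (mem_Iic.mpr hz) (mem_Iic.mpr le_rfl) hz
      have hpos : (0:ℝ) ≤ E * Real.exp (a*z) := by positivity
      clear_value V w E a z₀ C M₂ F
      linarith
    -- conclusion
    refine ⟨Real.exp (w z₀ - E * Real.exp (a*z₀)), Real.exp (w z₀ + E * Real.exp (a*z₀)), -z₀,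
      Real.exp_pos _, Real.exp_le_exp.mpr (by nlinarith [Real.exp_pos (a*z₀), hEpos]),
      by linarith, fun z hz => ?_⟩
    have hzz : z ≤ z₀ := by
      have : -(-z₀) = z₀ := by ring
      linarith [this ▸ hz]
    have hzneg : z < 0 := by linarith
    have habs : -lam * |z| = lam * z := by
      rw [abs_of_neg hzneg]
      ring
    have hVval : V z = Real.exp (w z + lam * z) := by
      rw [hwdef]
      simp only
      rw [sub_add_cancel, Real.exp_log (hVpos z)]
    have hgoal1 : Real.exp (w z₀ - E * Real.exp (a*z₀)) * Real.exp (lam * z) ≤ um - U z := by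
      rw [← Real.exp_add]
      have : um - U z = V z := rfl
      rw [this, hVval]
      exact Real.exp_le_exp.mpr (by linarith [hwlow z hzz])
    have hgoal2 : um - U z ≤ Real.exp (w z₀ + E * Real.exp (a*z₀)) * Real.exp (lam * z) := by
      rw [← Real.exp_add]
      have : um - U z = V z := rfl
      rw [this, hVval]
      exact Real.exp_le_exp.mpr (by linarith [hwup z hzz])
    rw [habs]
    exact ⟨hgoal1, hgoal2⟩


end
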